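/- arXiv:1902.01100 — 4 statements merged into one kernel-verified Lean document; each statement's English description precedes it below -/
import Mathlib

section
/- For every n ≥ 1, the relation ⪕ is a partial order on ℝⁿ: it is reflexive (a ⪕ a for all a), antisymmetric (a ⪕ b and b ⪕ a imply a = b), and transitive (a ⪕ b and b ⪕ c imply a ⪕ c). -/
/-- The set of indices at which `a` attains its minimum. -/
noncomputable def argminSet {n : ℕ} (a : Fin n → ℝ) : Finset (Fin n) :=
  Finset.univ.filter (fun i => ∀ j, a i ≤ a j)

/-- The minimum entry of `a`. -/
noncomputable def minval {n : ℕ} (a : Fin n → ℝ) : ℝ := ⨅ i, a i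

/-- The restriction of `a` to the indices in `S`, reindexed by `Fin S.card`
in increasing order. -/
noncomputable def restrictVec {n : ℕ} (S : Finset (Fin n)) (a : Fin n → ℝ) :
    Fin S.card → ℝ :=
  fun i => a (S.orderIsoOfFin rfl i).1

/-- The "min-sensitive" partial order `⪕` on `ℝⁿ` (Definition 1 of the paper):
for `n = 1` it is the usual order; for `n ≥ 2`, `a ⪕ b` iff (i) `a = b`, or
(ii) `min a < min b`, or (iii) `min a = min b` and `Argmin b ⊊ Argmin a`, or
(iv) `min a = min b`, `Argmin a = Argmin b ⊊ {1,...,n}` and the restrictions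
of `a` and `b` to the complement of the common argmin set are related. -/
noncomputable def msLE : (n : ℕ) → (Fin n → ℝ) → (Fin n → ℝ) → Prop
  | 0, _, _ => True
  | 1, a, b => a 0 ≤ b 0
  | n + 2, a, b =>
    a = b ∨
    minval a < minval b ∨
    (minval a = minval b ∧ argminSet b ⊂ argminSet a) ∨
    (minval a = minval b ∧ argminSet a = argminSet b ∧ argminSet a ⊂ Finset.univ ∧
      msLE ((argminSet a)ᶜ).card (restrictVec (argminSet a)ᶜ a) (restrictVec (argminSet a)ᶜ b))
termination_by n => n
decreasing_by
  have hne : (argminSet a).Nonempty := by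
    obtain ⟨i, -, hi⟩ := Finset.exists_min_image Finset.univ a ⟨0, Finset.mem_univ 0⟩
    refine ⟨i, ?_⟩
    unfold argminSet
    exact Finset.mem_filter.mpr ⟨Finset.mem_univ i, fun j => hi j (Finset.mem_univ j)⟩
  have h1 : 0 < (argminSet a).card := Finset.card_pos.mpr hne
  have h2 : ((argminSet a)ᶜ).card = Fintype.card (Fin (n + 2)) - (argminSet a).card :=
    Finset.card_compl _
  simp only [Fintype.card_fin] at h2
  omega


lemma my_minval_le {n : ℕ} (a : Fin (n+2) → ℝ) (j : Fin (n+2)) : minval a ≤ a j :=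
  ciInf_le (Set.Finite.bddBelow (Set.finite_range a)) j

lemma my_mem_argmin {n : ℕ} (a : Fin n → ℝ) (i : Fin n) :
    i ∈ argminSet a ↔ ∀ j, a i ≤ a j := by
  simp [argminSet]

lemma my_argmin_val {n : ℕ} (a : Fin (n+2) → ℝ) {i : Fin (n+2)}
    (hi : i ∈ argminSet a) : a i = minval a :=
  le_antisymm (le_ciInf ((my_mem_argmin a i).mp hi)) (my_minval_le a i)

lemma my_argmin_nonempty {n : ℕ} (a : Fin (n+2) → ℝ) : (argminSet a).Nonempty := by
  obtain ⟨i, -, hi⟩ := Finset.exists_min_image Finset.univ a ⟨0, Finset.mem_univ 0⟩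
  exact ⟨i, (my_mem_argmin a i).mpr fun j => hi j (Finset.mem_univ j)⟩

lemma my_compl_card_lt {n : ℕ} (a : Fin (n+2) → ℝ) : ((argminSet a)ᶜ).card < n + 2 := by
  have h1 : 0 < (argminSet a).card := Finset.card_pos.mpr (my_argmin_nonempty a)
  have h2 : ((argminSet a)ᶜ).card = Fintype.card (Fin (n + 2)) - (argminSet a).card :=
    Finset.card_compl _
  simp only [Fintype.card_fin] at h2
  omega

lemma my_recover {n : ℕ} (a b : Fin (n+2) → ℝ) (he : minval a = minval b)
    (hq : argminSet a = argminSet b)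
    (hr : restrictVec (argminSet a)ᶜ a = restrictVec (argminSet a)ᶜ b) : a = b := by
  funext i
  by_cases hi : i ∈ argminSet a
  · rw [my_argmin_val a hi, my_argmin_val b (hq ▸ hi), he]
  · have hi' : i ∈ (argminSet a)ᶜ := Finset.mem_compl.mpr hi
    have hk := congrFun hr (((argminSet a)ᶜ.orderIsoOfFin rfl).symm ⟨i, hi'⟩)
    unfold restrictVec at hk
    rwa [OrderIso.apply_symm_apply] at hk

lemma msLE_aux : ∀ n : ℕ,
    (∀ a : Fin n → ℝ, msLE n a a) ∧
    (∀ a b : Fin n → ℝ, msLE n a b → msLE n b a → a = b) ∧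
    (∀ a b c : Fin n → ℝ, msLE n a b → msLE n b c → msLE n a c) := by
  intro n
  induction n using Nat.strong_induction_on with
  | _ n IH =>
  match n with
  | 0 =>
    simp only [msLE]
    refine ⟨fun a => trivial, fun a b _ _ => ?_, fun _ _ _ _ _ => trivial⟩
    funext i; exact absurd i.2 (by omega)
  | 1 =>
    simp only [msLE]
    refine ⟨fun a => le_refl _, fun a b h1 h2 => ?_, fun a b c h1 h2 => le_trans h1 h2⟩
    funext i
    have : i = 0 := Subsingleton.elim i 0
    subst this; exact le_antisymm h1 h2
  | (n + 2) =>
    refine ⟨fun a => ?_, fun a b h1 h2 => ?_, fun a b c h1 h2 => ?_⟩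
    · simp only [msLE]; left; trivial
    · -- antisymmetry
      simp only [msLE] at h1 h2
      rcases h1 with rfl | h1 | ⟨he1, hs1⟩ | ⟨he1, hq1, hu1, hr1⟩
      · rfl
      · rcases h2 with rfl | h2 | ⟨he2, hs2⟩ | ⟨he2, hq2, hu2, hr2⟩
        · rfl
        · exact absurd h2 (lt_asymm h1)
        · exact absurd he2 (ne_of_gt h1)
        · exact absurd he2 (ne_of_gt h1)
      · rcases h2 with rfl | h2 | ⟨he2, hs2⟩ | ⟨he2, hq2, hu2, hr2⟩
        · rfl
        · exact absurd he1 (ne_of_gt h2)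
        · exact absurd (hs1.trans hs2) (ssubset_irrefl _)
        · exact absurd hq2 hs1.ne
      · rcases h2 with rfl | h2 | ⟨he2, hs2⟩ | ⟨he2, hq2, hu2, hr2⟩
        · rfl
        · exact absurd he1 (ne_of_gt h2)
        · exact absurd hq1 hs2.ne
        · rw [← hq1] at hr2
          exact my_recover a b he1 hq1
            ((IH _ (my_compl_card_lt a)).2.1 _ _ hr1 hr2)
    · -- transitivity
      simp only [msLE] at h1 h2 ⊢
      rcases h1 with rfl | h1 | ⟨he1, hs1⟩ | ⟨he1, hq1, hu1, hr1⟩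
      · exact h2
      · rcases h2 with rfl | h2 | ⟨he2, hs2⟩ | ⟨he2, hq2, hu2, hr2⟩
        · exact Or.inr (Or.inl h1)
        · exact Or.inr (Or.inl (lt_trans h1 h2))
        · exact Or.inr (Or.inl (lt_of_lt_of_le h1 he2.le))
        · exact Or.inr (Or.inl (lt_of_lt_of_le h1 he2.le))
      · rcases h2 with rfl | h2 | ⟨he2, hs2⟩ | ⟨he2, hq2, hu2, hr2⟩
        · exact Or.inr (Or.inr (Or.inl ⟨he1, hs1⟩))
        · exact Or.inr (Or.inl (lt_of_le_of_lt he1.le h2))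
        · exact Or.inr (Or.inr (Or.inl ⟨he1.trans he2, hs2.trans hs1⟩))
        · exact Or.inr (Or.inr (Or.inl ⟨he1.trans he2, hq2 ▸ hs1⟩))
      · rcases h2 with rfl | h2 | ⟨he2, hs2⟩ | ⟨he2, hq2, hu2, hr2⟩
        · exact Or.inr (Or.inr (Or.inr ⟨he1, hq1, hu1, hr1⟩))
        · exact Or.inr (Or.inl (lt_of_le_of_lt he1.le h2))
        · refine Or.inr (Or.inr (Or.inl ⟨he1.trans he2, ?_⟩))
          rw [hq1]; exact hs2
        · rw [← hq1] at hr2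
          exact Or.inr (Or.inr (Or.inr ⟨he1.trans he2, hq1.trans hq2, hu1,
            (IH _ (my_compl_card_lt a)).2.2 _ _ _ hr1 hr2⟩))

/-- for every `n ≥ 1`, the relation `⪕` is a partial order on `ℝⁿ`. -/
theorem msLE_isPartialOrder (n : ℕ) (hn : 1 ≤ n) :
    (∀ a : Fin n → ℝ, msLE n a a) ∧
    (∀ a b : Fin n → ℝ, msLE n a b → msLE n b a → a = b) ∧
    (∀ a b c : Fin n → ℝ, msLE n a b → msLE n b c → msLE n a c) := msLE_aux n
end

section
/- For all a, b ∈ ℝⁿ, if a_i ≤ b_i for every i ∈ {1,...,n} (componentwise inequality), then a ⪕ b. -/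
lemma argminSet_nonempty {n : ℕ} (a : Fin (n+1) → ℝ) : (argminSet a).Nonempty := by
  obtain ⟨i, -, hi⟩ := Finset.exists_min_image Finset.univ a ⟨0, Finset.mem_univ 0⟩
  exact ⟨i, Finset.mem_filter.mpr ⟨Finset.mem_univ i, fun j => hi j (Finset.mem_univ j)⟩⟩

lemma minval_le {n : ℕ} (a : Fin n → ℝ) (i : Fin n) : minval a ≤ a i :=
  ciInf_le (Set.Finite.bddBelow (Set.finite_range a)) i

lemma minval_eq {n : ℕ} (a : Fin n → ℝ) {i : Fin n} (hi : i ∈ argminSet a) :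
    minval a = a i := by
  have h := (Finset.mem_filter.mp hi).2
  have : Nonempty (Fin n) := ⟨i⟩
  exact le_antisymm (minval_le a i) (le_ciInf h)

lemma msLE_of_le_aux (n : ℕ) : ∀ a b : Fin n → ℝ, (∀ i, a i ≤ b i) → msLE n a b := by
  induction n using Nat.strong_induction_on with
  | _ n IH =>
    match n with
    | 0 => intro a b hab; rw [msLE]; trivial
    | 1 => intro a b hab; rw [msLE]; exact hab 0
    | m + 2 =>
      intro a b hab
      rw [msLE]
      have hle : minval a ≤ minval b := by
        obtain ⟨j, hj⟩ := argminSet_nonempty b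
        calc minval a ≤ a j := minval_le a j
          _ ≤ b j := hab j
          _ = minval b := (minval_eq b hj).symm
      rcases lt_or_eq_of_le hle with hlt | heq
      · exact Or.inr (Or.inl hlt)
      · have hsub : argminSet b ⊆ argminSet a := by
          intro i hi
          have h1 : b i = minval b := (minval_eq b hi).symm
          have h2 : a i = minval a := le_antisymm (by rw [heq, ← h1]; exact hab i) (minval_le a i)
          refine Finset.mem_filter.mpr ⟨Finset.mem_univ i, fun j => ?_⟩
          rw [h2]; exact minval_le a j
        rcases eq_or_ne (argminSet b) (argminSet a) with heqs | hne'
        case inr =>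
          exact Or.inr (Or.inr (Or.inl ⟨heq, Finset.ssubset_iff_subset_ne.mpr ⟨hsub, hne'⟩⟩))
        by_cases huniv : argminSet a = Finset.univ
        · left
          funext i
          have hia : i ∈ argminSet a := huniv ▸ Finset.mem_univ i
          have hib : i ∈ argminSet b := heqs ▸ hia
          rw [← minval_eq a hia, ← minval_eq b hib, heq]
        · refine Or.inr (Or.inr (Or.inr ⟨heq, heqs.symm, Finset.ssubset_univ_iff.mpr huniv, ?_⟩))
          apply IH
          · have h1 : 0 < (argminSet a).card := Finset.card_pos.mpr (argminSet_nonempty a)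
            have h2 : ((argminSet a)ᶜ).card = Fintype.card (Fin (m + 2)) - (argminSet a).card :=
              Finset.card_compl _
            simp only [Fintype.card_fin] at h2
            omega
          · intro i; exact hab _

/-- the componentwise inequality `a ≤ b` implies `a ⪕ b`. -/
theorem msLE_of_le (n : ℕ) (hn : 1 ≤ n) (a b : Fin n → ℝ)
    (hab : ∀ i, a i ≤ b i) : msLE n a b := msLE_of_le_aux n a b hab
end

section
/- Let T > 0, let F : [0,T] → ℝⁿ be continuous, and let T_1, ..., T_d be subsets of [0,T] with ⋃_{k=1}^d T_k = [0,T]. If for each k = 1,...,d the mapping F is nondecreasing on T_k (i.e., for s, t ∈ T_k with s ≤ t one has F(s) ≤ F(t) componentwise), then F is nondecreasing on [0,T]: for all 0 ≤ s ≤ t ≤ T, F(s) ≤ F(t) componentwise. -/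
open Set Topology Filter

/-- Lemma 3 of the paper: if a continuous map `F : [0,T] → ℝⁿ` is
nondecreasing (componentwise) on each of the sets `T_1, ..., T_d` covering `[0,T]`,
then it is nondecreasing on `[0,T]`. -/
theorem monotone_of_piecewise_monotone
    (n d : ℕ) (T : ℝ) (hT : 0 < T)
    (F : ℝ → Fin n → ℝ)
    (hcont : ContinuousOn F (Set.Icc 0 T))
    (Ts : Fin d → Set ℝ)
    (hsub : ∀ k, Ts k ⊆ Set.Icc 0 T)
    (hcover : Set.Icc 0 T ⊆ ⋃ k, Ts k)
    (hmono : ∀ k, ∀ s ∈ Ts k, ∀ t ∈ Ts k, s ≤ t → ∀ i, F s i ≤ F t i) :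
    ∀ s ∈ Set.Icc (0 : ℝ) T, ∀ t ∈ Set.Icc (0 : ℝ) T, s ≤ t → ∀ i, F s i ≤ F t i := by
  intro s hs t ht hst i
  by_contra hlt
  push_neg at hlt
  set g : ℝ → ℝ := fun x => F x i with hg
  have hsub' : Icc s t ⊆ Icc 0 T := Icc_subset_Icc hs.1 ht.2
  have hgc : ContinuousOn g (Icc s t) :=
    ((continuous_apply i).comp_continuousOn hcont).mono hsub'
  set A : ℝ → Set ℝ := fun c => Icc s t ∩ g ⁻¹' (Iic c) with hA
  have hAne : ∀ c, g t < c → (A c).Nonempty := fun c hc =>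
    ⟨t, ⟨⟨hst, le_refl t⟩, le_of_lt hc⟩⟩
  have hAbdd : ∀ c, BddBelow (A c) := fun c => ⟨s, fun x hx => hx.1.1⟩
  have hAclosed : ∀ c, IsClosed (A c) := fun c =>
    hgc.preimage_isClosed_of_isClosed isClosed_Icc isClosed_Iic
  set u : ℝ → ℝ := fun c => sInf (A c) with hu
  have humem : ∀ c ∈ Ioo (g t) (g s), u c ∈ A c := fun c hc =>
    (hAclosed c).csInf_mem (hAne c hc.1) (hAbdd c)
  -- g (u c) = c
  have hueq : ∀ c ∈ Ioo (g t) (g s), g (u c) = c := by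
    intro c hc
    have hmem := humem c hc
    have hle : g (u c) ≤ c := hmem.2
    have hsu : s < u c := by
      rcases lt_or_eq_of_le hmem.1.1 with h | h
      · exact h
      · exfalso; rw [← h] at hle; exact absurd hc.2 (not_lt.2 hle)
    refine le_antisymm hle ?_
    have hIco : Ico s (u c) ⊆ Icc s t := fun x hx =>
      ⟨hx.1, le_trans (le_of_lt hx.2) hmem.1.2⟩
    have hcw : ContinuousWithinAt g (Ico s (u c)) (u c) :=
      ((hgc (u c) hmem.1).mono hIco)
    have hne : (𝓝[Ico s (u c)] (u c)).NeBot := by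
      rw [← mem_closure_iff_nhdsWithin_neBot, closure_Ico (ne_of_lt hsu)]
      exact ⟨le_of_lt hsu, le_refl _⟩
    refine ge_of_tendsto hcw ?_
    filter_upwards [eventually_mem_nhdsWithin] with x hx
    by_contra hxc
    push_neg at hxc
    have : u c ≤ x := csInf_le (hAbdd c) ⟨hIco hx, le_of_lt hxc⟩
    exact absurd hx.2 (not_lt.2 this)
  -- u is antitone
  have hanti : ∀ c₁ c₂, c₁ ≤ c₂ → g t < c₁ → u c₂ ≤ u c₁ := by
    intro c₁ c₂ h12 h1
    exact le_csInf (hAne c₁ h1) fun x hx =>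
      csInf_le (hAbdd c₂) ⟨hx.1, le_trans hx.2 h12⟩
  -- pigeonhole over the infinite interval
  have hinf : (Ioo (g t) (g s)).Infinite := Set.Ioo_infinite hlt
  haveI := hinf.to_subtype
  have hK : ∀ c : Ioo (g t) (g s), ∃ k, u c ∈ Ts k := fun c =>
    mem_iUnion.1 (hcover (hsub' (humem c c.2).1))
  choose K hKmem using hK
  obtain ⟨c₁, c₂, hne, hKeq⟩ := Finite.exists_ne_map_eq_of_infinite K
  have key : ∀ a b : Ioo (g t) (g s), (a : ℝ) < b → K a = K b → False := by
    intro a b hab hKab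
    have h1 : u b ≤ u a := hanti a b (le_of_lt hab) a.2.1
    have := hmono (K a) (u b) (hKab ▸ hKmem b) (u a) (hKmem a) h1 i
    rw [show F (u b) i = g (u b) from rfl, show F (u a) i = g (u a) from rfl,
      hueq a a.2, hueq b b.2] at this
    exact absurd hab (not_lt.2 this)
  rcases lt_or_gt_of_ne (Subtype.coe_injective.ne hne) with h | h
  · exact key c₁ c₂ h hKeq
  · exact key c₂ c₁ h hKeq.symm
end

section
/- Let T > 0, let F : [0,T] → ℝⁿ be continuous, let L ≥ 0, and let T_1, ..., T_d be subsets of [0,T] with ⋃_{k=1}^d T_k = [0,T]. If for each k = 1,...,d the mapping F is Lipschitz with constant L on T_k (i.e., ‖F(s) − F(t)‖ ≤ L·|s − t| for all s, t ∈ T_k), then F is Lipschitz with constant L on all of [0,T]. -/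
/-- Lemma 4 of the paper: if a continuous map `F : [0,T] → ℝⁿ`
(with the Euclidean norm) is Lipschitz with constant `L` on each of the sets
`T_1, ..., T_d` covering `[0,T]`, then it is Lipschitz with constant `L` on `[0,T]`. -/
theorem lipschitz_of_piecewise_lipschitz
    (n d : ℕ) (T L : ℝ) (hT : 0 < T) (hL : 0 ≤ L)
    (F : ℝ → EuclideanSpace ℝ (Fin n))
    (hcont : ContinuousOn F (Set.Icc 0 T))
    (Ts : Fin d → Set ℝ)
    (hsub : ∀ k, Ts k ⊆ Set.Icc 0 T)
    (hcover : Set.Icc 0 T ⊆ ⋃ k, Ts k)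
    (hlip : ∀ k, ∀ s ∈ Ts k, ∀ t ∈ Ts k, ‖F s - F t‖ ≤ L * |s - t|) :
    ∀ s ∈ Set.Icc (0 : ℝ) T, ∀ t ∈ Set.Icc (0 : ℝ) T, ‖F s - F t‖ ≤ L * |s - t| := by
  -- closures of the pieces
  set C : Fin d → Set ℝ := fun k => closure (Ts k) with hC
  have hCsub : ∀ k, C k ⊆ Set.Icc 0 T := fun k =>
    closure_minimal (hsub k) isClosed_Icc
  have hCcover : Set.Icc (0:ℝ) T ⊆ ⋃ k, C k :=
    hcover.trans (Set.iUnion_mono fun k => subset_closure)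
  -- Lipschitz bound extends to closures, by continuity
  have hClip : ∀ k, ∀ s ∈ C k, ∀ t ∈ C k, ‖F s - F t‖ ≤ L * |s - t| := by
    intro k
    set S : Set (ℝ × ℝ) :=
      (Set.Icc 0 T ×ˢ Set.Icc 0 T) ∩
        {p : ℝ × ℝ | ‖F p.1 - F p.2‖ - L * |p.1 - p.2| ≤ 0} with hS
    have hg : ContinuousOn (fun p : ℝ × ℝ => ‖F p.1 - F p.2‖ - L * |p.1 - p.2|)
        (Set.Icc 0 T ×ˢ Set.Icc 0 T) := by
      apply ContinuousOn.sub
      · apply ContinuousOn.norm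
        apply ContinuousOn.sub
        · exact hcont.comp continuousOn_fst (fun p hp => hp.1)
        · exact hcont.comp continuousOn_snd (fun p hp => hp.2)
      · exact (continuous_const.mul ((continuous_fst.sub continuous_snd).abs)).continuousOn
    have hSclosed : IsClosed S := by
      have := hg.preimage_isClosed_of_isClosed (isClosed_Icc.prod isClosed_Icc)
        (isClosed_Iic (a := (0:ℝ)))
      simpa [hS, Set.preimage, Set.mem_Iic] using this
    have hsubS : Ts k ×ˢ Ts k ⊆ S := by
      rintro ⟨s, t⟩ ⟨hs, ht⟩
      exact ⟨⟨hsub k hs, hsub k ht⟩, by simpa using hlip k s hs t ht⟩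
    have hclS : C k ×ˢ C k ⊆ S := by
      rw [hC, ← closure_prod_eq]
      exact closure_minimal hsubS hSclosed
    intro s hs t ht
    have := hclS (Set.mk_mem_prod hs ht)
    have h2 := this.2
    simp only [Set.mem_setOf_eq, sub_nonpos] at h2
    exact h2
  -- main claim for ordered pairs
  have key : ∀ s ∈ Set.Icc (0:ℝ) T, ∀ t ∈ Set.Icc (0:ℝ) T, s ≤ t →
      ‖F t - F s‖ ≤ L * (t - s) := by
    intro s hs t ht hst
    set A : Set ℝ := Set.Icc s t ∩ {u | ‖F u - F s‖ - L * (u - s) ≤ 0} with hA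
    have hIccsub : Set.Icc s t ⊆ Set.Icc 0 T :=
      Set.Icc_subset_Icc hs.1 ht.2
    have hAclosed : IsClosed A := by
      have hg : ContinuousOn (fun u => ‖F u - F s‖ - L * (u - s)) (Set.Icc s t) := by
        apply ContinuousOn.sub
        · exact ((hcont.mono hIccsub).sub continuousOn_const).norm
        · exact (continuous_const.mul (continuous_id.sub continuous_const)).continuousOn
      have := hg.preimage_isClosed_of_isClosed isClosed_Icc (isClosed_Iic (a := (0:ℝ)))
      simpa [hA, Set.preimage, Set.mem_Iic] using this
    have hsA : s ∈ A := ⟨Set.left_mem_Icc.2 hst, by simp⟩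
    have hAne : A.Nonempty := ⟨s, hsA⟩
    have hAbdd : BddAbove A := ⟨t, fun u hu => hu.1.2⟩
    set c := sSup A with hc
    have hcA : c ∈ A := hAclosed.csSup_mem hAne hAbdd
    have hcle : c ≤ t := hcA.1.2
    have hsc : s ≤ c := hcA.1.1
    have hcbound : ‖F c - F s‖ ≤ L * (c - s) := by
      have := hcA.2; simpa [sub_nonpos] using this
    rcases eq_or_lt_of_le hcle with hct | hct
    · calc ‖F t - F s‖ = ‖F c - F s‖ := by rw [hct]
        _ ≤ L * (c - s) := hcbound
        _ = L * (t - s) := by rw [hct]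
    · exfalso
      -- c ∈ closure (Ioc c t), and Ioc c t is covered by the C k
      have hIoc : Set.Ioc c t ⊆ ⋃ k, (C k ∩ Set.Ioc c t) := by
        intro u hu
        have hu' : u ∈ Set.Icc 0 T :=
          hIccsub ⟨hsc.trans hu.1.le, hu.2⟩
        rcases Set.mem_iUnion.1 (hCcover hu') with ⟨k, hk⟩
        exact Set.mem_iUnion.2 ⟨k, hk, hu⟩
      have hcmem : c ∈ closure (Set.Ioc c t) := by
        rw [closure_Ioc hct.ne]
        exact Set.left_mem_Icc.2 hct.le
      have : c ∈ ⋃ k, closure (C k ∩ Set.Ioc c t) := by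
        rw [← closure_iUnion_of_finite]
        exact closure_mono hIoc hcmem
      rcases Set.mem_iUnion.1 this with ⟨k, hk⟩
      have hcCk : c ∈ C k := by
        have : closure (C k ∩ Set.Ioc c t) ⊆ C k :=
          closure_minimal (Set.inter_subset_left) isClosed_closure
        exact this hk
      -- the set C k ∩ Ioc c t is nonempty
      have hne : (C k ∩ Set.Ioc c t).Nonempty := by
        by_contra h
        rw [Set.not_nonempty_iff_eq_empty] at h
        rw [h] at hk
        simp at hk
      rcases hne with ⟨u, huC, huIoc⟩
      have huA : u ∈ A := by
        constructor
        · exact ⟨hsc.trans huIoc.1.le, huIoc.2⟩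
        · have h1 : ‖F u - F c‖ ≤ L * (u - c) := by
            have := hClip k u huC c hcCk
            rwa [abs_of_nonneg (sub_nonneg.2 huIoc.1.le)] at this
          have : ‖F u - F s‖ ≤ L * (u - c) + L * (c - s) := by
            calc ‖F u - F s‖ = ‖(F u - F c) + (F c - F s)‖ := by abel_nf
              _ ≤ ‖F u - F c‖ + ‖F c - F s‖ := norm_add_le _ _
              _ ≤ L * (u - c) + L * (c - s) := add_le_add h1 hcbound
          simp only [Set.mem_setOf_eq, sub_nonpos]
          calc ‖F u - F s‖ ≤ L * (u - c) + L * (c - s) := this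
            _ = L * (u - s) := by ring
      have : u ≤ c := le_csSup hAbdd huA
      exact absurd this (not_le.2 huIoc.1)
  -- conclude
  intro s hs t ht
  rcases le_total s t with h | h
  · rw [norm_sub_rev, abs_sub_comm, abs_of_nonneg (sub_nonneg.2 h)]
    exact key s hs t ht h
  · rw [abs_of_nonneg (sub_nonneg.2 h)]
    exact key t ht s hs h
end
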